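/- The space of alternal moulds ARI_al is closed under the ari-bracket: if A and B are alternal, then ari(A,B) = arit(B)·A + lu(A,B) - arit(A)·B is alternal. In particular ARI_al is a Lie algebra under ari. -/

import Mathlib

open List

variable {K : Type*} [Field K] [CharZero K]

/-- The multiset (as a list, with multiplicity) of shuffles of two words. -/
def shuffles {α : Type*} : List α → List α → List (List α)
  | [], v => [v]
  | u, [] => [u]
  | x :: u, y :: v =>
      ((shuffles u (y :: v)).map (x :: ·)) ++ ((shuffles (x :: u) v).map (y :: ·))
  termination_by u v => u.length + v.length

/-- A mould (at the level of evaluations) is alternal if all its shuffle sums over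
pairs of nonempty words vanish. -/
def Alternal (A : List K → K) : Prop :=
  ∀ u v : List K, u ≠ [] → v ≠ [] → ((shuffles u v).map A).sum = 0

/-- mould multiplication `mu`. -/
def mu (A B : List K → K) : List K → K :=
  fun w => ∑ k ∈ Finset.range (w.length + 1), A (w.take k) * B (w.drop k)

/-- `lu(A,B) = mu(A,B) - mu(B,A)`. -/
def lu (A B : List K → K) : List K → K :=
  fun w => mu A B w - mu B A w

/-- All decompositions of a word into two consecutive subwords. -/
def splits2 {α : Type*} (w : List α) : List (List α × List α) :=
  (List.range (w.length + 1)).map fun k => (w.take k, w.drop k)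

/-- All decompositions of a word into three consecutive subwords. -/
def splits3 {α : Type*} (w : List α) : List (List α × List α × List α) :=
  (splits2 w).flatMap fun p => (splits2 p.2).map fun q => (p.1, q.1, q.2)

/-- Add `s` to the first letter of a word. -/
def addFirst (s : K) : List K → List K
  | [] => []
  | x :: xs => (x + s) :: xs

/-- Add `s` to the last letter of a word. -/
def addLast (s : K) : List K → List K
  | [] => []
  | [x] => [x + s]
  | x :: xs => x :: addLast s xs

/-- `amit` for u-moulds: `(amit(B)·A)(w) = Σ_{w=abc, b,c≠∅} A(a⌈c) B(b)`. -/
def amitU (B A : List K → K) : List K → K := fun w =>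
  ((splits3 w).map fun p =>
    match p with
    | (_, [], _) => 0
    | (_, _, []) => 0
    | (a, b, c) => A (a ++ addFirst b.sum c) * B b).sum

/-- `anit` for u-moulds: `(anit(B)·A)(w) = Σ_{w=abc, a,b≠∅} A(a⌉c) B(b)`. -/
def anitU (B A : List K → K) : List K → K := fun w =>
  ((splits3 w).map fun p =>
    match p with
    | ([], _, _) => 0
    | (_, [], _) => 0
    | (a, b, c) => A (addLast b.sum a ++ c) * B b).sum

/-- `arit(B)·A = amit(B)·A - anit(B)·A` on u-moulds. -/
def aritU (B A : List K → K) : List K → K :=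
  fun w => amitU B A w - anitU B A w

/-- the ari bracket on u-moulds. -/
def ariU (A B : List K → K) : List K → K :=
  fun w => aritU B A w + lu A B w - aritU A B w

/-- `amit` for v-moulds. -/
def amitV (B A : List K → K) : List K → K := fun w =>
  ((splits3 w).map fun p =>
    match p with
    | (_, [], _) => 0
    | (_, _, []) => 0
    | (a, b, c0 :: c') => A (a ++ c0 :: c') * B (b.map (fun x => x - c0))).sum

/-- `anit` for v-moulds. -/
def anitV (B A : List K → K) : List K → K := fun w =>
  ((splits3 w).map fun p =>
    match p with
    | ([], _, _) => 0
    | (_, [], _) => 0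
    | (a, b, c) => A (a ++ c) * B (b.map (fun x => x - a.getLastD 0))).sum

/-- `arit(B)·A = amit(B)·A - anit(B)·A` on v-moulds. -/
def aritV (B A : List K → K) : List K → K :=
  fun w => amitV B A w - anitV B A w

/-- the ari bracket on v-moulds. -/
def ariV (A B : List K → K) : List K → K :=
  fun w => aritV B A w + lu A B w - aritV A B w

/-- `neg(A)(u_1,...,u_r) = A(-u_1,...,-u_r)`. -/
def negM (A : List K → K) : List K → K := fun w => A (w.map fun x => -x)

/-- `push(A)(u_1,...,u_r) = A(-u_1-⋯-u_r, u_1, ..., u_{r-1})`. -/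
def pushM (A : List K → K) : List K → K := fun w =>
  match w with
  | [] => A []
  | _ :: _ => A ((-w.sum) :: w.dropLast)

/-- `mantar(A)(u_1,...,u_r) = (-1)^{r-1} A(u_r,...,u_1)`. -/
def mantarM (A : List K → K) : List K → K :=
  fun w => (-1 : K) ^ (w.length + 1) * A w.reverse

/-- argument list for swap from u-moulds to v-moulds:
`(v_1,...,v_r) ↦ (v_r, v_{r-1}-v_r, ..., v_1-v_2)`. -/
def swapUargs (w : List K) : List K :=
  List.zipWith (· - ·) w.reverse (0 :: w.reverse)

/-- argument list for swap from v-moulds to u-moulds: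
`(u_1,...,u_r) ↦ (u_1+⋯+u_r, u_1+⋯+u_{r-1}, ..., u_1)`. -/
def swapVargs (w : List K) : List K :=
  (List.range w.length).map fun i => (w.take (w.length - i)).sum

/-- swap, sending a u-mould to a v-mould. -/
def swapUV (A : List K → K) : List K → K := fun w => A (swapUargs w)

/-- swap, sending a v-mould to a u-mould. -/
def swapVU (A : List K → K) : List K → K := fun w => A (swapVargs w)

/-- A constant-valued mould: its value depends only on the depth. -/
def IsConstantMould (C : List K → K) : Prop :=
  ∀ w w' : List K, w.length = w'.length → C w = C w'


/-!
Summing `ari(A,B) = arit(B)·A + lu(A,B) - arit(A)·B` over the shuffles of two nonempty words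
`u`, `v`, each piece vanishes on its own.

For `lu`, deconcatenation of shuffles together with alternality of `A` and `B` gives
`Σ mu(A,B) = A(v) B(u) + A(u) B(v)`, which is symmetric in `A` and `B`.

For `arit(B)·A`, write `amit` and `anit` as sums over factorizations `w = a b c` and deconcatenate
the shuffles of `u` and `v` into three parts. Since `B` is alternal, only the terms in which the
block `b` is a factor of `u` or of `v` survive. For such a block, taken from `v` say, both
`amit` and `anit` reduce to the same sum, in which one letter of `u` is shifted by `Σ b`; the
remaining terms shift a letter of `v` instead and assemble into shuffle sums of `A` against `u`,
which vanish because `A` is alternal.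
-/

section ListSums

variable {α β M : Type*} [AddCommMonoid M]

def lsum (l : List α) (f : α → M) : M := (l.map f).sum

@[simp] lemma lsum_nil (f : α → M) : lsum [] f = 0 := rfl

@[simp] lemma lsum_cons (a : α) (l : List α) (f : α → M) :
    lsum (a :: l) f = f a + lsum l f := by
  simp [lsum]

@[simp] lemma lsum_append (l₁ l₂ : List α) (f : α → M) :
    lsum (l₁ ++ l₂) f = lsum l₁ f + lsum l₂ f := by
  simp [lsum]

@[simp] lemma lsum_map (g : α → β) (l : List α) (f : β → M) :
    lsum (l.map g) f = lsum l (fun x => f (g x)) := by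
  simp [lsum, Function.comp_def]

@[simp] lemma lsum_zero (l : List α) : lsum l (fun _ => (0 : M)) = 0 := by
  simp [lsum]

lemma lsum_add (l : List α) (f g : α → M) :
    lsum l (fun x => f x + g x) = lsum l f + lsum l g :=
  List.sum_map_add

lemma lsum_sub {G : Type*} [AddCommGroup G] (l : List α) (f g : α → G) :
    lsum l (fun x => f x - g x) = lsum l f - lsum l g := by
  induction l with
  | nil => simp
  | cons a l ih => simp only [lsum_cons, ih]; abel

lemma lsum_congr {l : List α} {f g : α → M} (h : ∀ x ∈ l, f x = g x) :
    lsum l f = lsum l g := by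
  rw [lsum, List.map_congr_left h, lsum]

lemma lsum_ite (P : Prop) [Decidable P] (l : List α) (f : α → M) :
    lsum l (fun x => if P then f x else 0) = if P then lsum l f else 0 := by
  split_ifs <;> simp

lemma lsum_mul_left {R : Type*} [NonUnitalNonAssocSemiring R] (l : List α) (f : α → R)
    (r : R) : lsum l (fun x => r * f x) = r * lsum l f :=
  List.sum_map_mul_left l f r

lemma lsum_mul_right {R : Type*} [NonUnitalNonAssocSemiring R] (l : List α) (f : α → R)
    (r : R) : lsum l (fun x => f x * r) = lsum l f * r :=
  List.sum_map_mul_right l f r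

lemma lsum_comm (l : List α) (m : List β) (f : α → β → M) :
    lsum l (fun x => lsum m (f x)) = lsum m (fun y => lsum l (f · y)) := by
  induction l with
  | nil => simp
  | cons a l ih => simp only [lsum_cons, ih, ← lsum_add]

lemma lsum_comm₃ {γ : Type*} (l : List α) (m : α → List β) (n : List γ)
    (f : α → β → γ → M) :
    lsum l (fun x => lsum (m x) (fun y => lsum n (f x y))) =
      lsum n (fun z => lsum l (fun x => lsum (m x) (fun y => f x y z))) := by
  rw [← lsum_comm]
  exact lsum_congr fun x _ => lsum_comm _ _ _

lemma lsum_flatMap (l : List α) (g : α → List β) (f : β → M) :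
    lsum (l.flatMap g) f = lsum l (fun x => lsum (g x) f) := by
  induction l with
  | nil => rfl
  | cons a l ih => simp [List.flatMap_cons, ih]

end ListSums

section Shuffles

variable {α M : Type*} [AddCommMonoid M]

@[simp] lemma shuffles_nil_left (v : List α) : shuffles [] v = [v] := by
  rw [shuffles]

@[simp] lemma shuffles_nil_right (u : List α) : shuffles u [] = [u] := by
  cases u with
  | nil => rw [shuffles]
  | cons => rw [shuffles]; simp

lemma shuffles_cons_cons (x y : α) (u v : List α) :
    shuffles (x :: u) (y :: v) =
      (shuffles u (y :: v)).map (x :: ·) ++ (shuffles (x :: u) v).map (y :: ·) := by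
  rw [shuffles]

lemma perm_append_of_mem_shuffles {u v w : List α} (h : w ∈ shuffles u v) : w ~ u ++ v := by
  induction u, v using shuffles.induct generalizing w with
  | case1 v => simp_all
  | case2 u _ => simp_all
  | case3 x u y v ih₁ ih₂ =>
    simp only [shuffles_cons_cons, List.mem_append, List.mem_map] at h
    rcases h with ⟨w', hw', rfl⟩ | ⟨w', hw', rfl⟩
    · exact (ih₁ hw').cons x
    · exact ((ih₂ hw').cons y).trans List.perm_middle.symm

lemma perm_shuffles_comm (u v : List α) : shuffles u v ~ shuffles v u := by
  induction u, v using shuffles.induct with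
  | case1 v => cases v <;> simp
  | case2 u _ => simp
  | case3 x u y v ih₁ ih₂ =>
    rw [shuffles_cons_cons, shuffles_cons_cons y x]
    exact ((ih₁.map _).append (ih₂.map _)).trans List.perm_append_comm

lemma ne_nil_of_mem_shuffles {u v w : List α} (hu : u ≠ []) (h : w ∈ shuffles u v) :
    w ≠ [] := by
  rintro rfl
  simpa [hu] using (perm_append_of_mem_shuffles h).symm.eq_nil

lemma lsum_shuffles_comm (u v : List α) (f : List α → M) :
    lsum (shuffles u v) f = lsum (shuffles v u) f :=
  ((perm_shuffles_comm u v).map f).sum_eq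

lemma lsum_shuffles_cons_cons (x y : α) (u v : List α) (f : List α → M) :
    lsum (shuffles (x :: u) (y :: v)) f =
      lsum (shuffles u (y :: v)) (fun w => f (x :: w)) +
        lsum (shuffles (x :: u) v) (fun w => f (y :: w)) := by
  simp [shuffles_cons_cons]

lemma lsum_shuffles_concat_concat (u v : List α) (t z : α) (f : List α → M) :
    lsum (shuffles (u ++ [t]) (v ++ [z])) f =
      lsum (shuffles u (v ++ [z])) (fun w => f (w ++ [t])) +
        lsum (shuffles (u ++ [t]) v) (fun w => f (w ++ [z])) := by
  induction u generalizing v f with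
  | nil =>
    induction v generalizing f with
    | nil => simp [lsum_shuffles_cons_cons, add_comm]
    | cons η v ih =>
      simp only [List.nil_append, List.cons_append, lsum_shuffles_cons_cons,
        shuffles_nil_left, lsum_cons, lsum_nil] at ih ⊢
      rw [ih]; abel
  | cons ξ u ihu =>
    induction v generalizing f with
    | nil =>
      have := ihu [] fun w => f (ξ :: w)
      simp only [List.nil_append, List.cons_append, lsum_shuffles_cons_cons,
        shuffles_nil_right, lsum_cons, lsum_nil] at this ⊢
      rw [this]; abel
    | cons η v ihv =>
      have := ihu (η :: v) fun w => f (ξ :: w)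
      simp only [List.cons_append, lsum_shuffles_cons_cons] at this ihv ⊢
      rw [this, ihv]; abel

end Shuffles

section Splits

variable {α M : Type*} [AddCommMonoid M]

@[simp] lemma splits2_nil : splits2 ([] : List α) = [([], [])] := rfl

lemma splits2_cons (x : α) (w : List α) :
    splits2 (x :: w) = ([], x :: w) :: (splits2 w).map fun p => (x :: p.1, p.2) := by
  simp [splits2, List.range_succ_eq_map, Function.comp_def]

lemma mem_splits2 {w : List α} {p : List α × List α} : p ∈ splits2 w ↔ p.1 ++ p.2 = w := by
  induction w generalizing p with
  | nil => simp [Prod.ext_iff]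
  | cons x w ih =>
    obtain ⟨_ | ⟨y, a⟩, b⟩ := p <;> simp [splits2_cons, ih, eq_comm, and_comm]

def splitsMid : List α → List (List α × α × List α)
  | [] => []
  | t :: r => ([], t, r) :: (splitsMid r).map fun m => (t :: m.1, m.2.1, m.2.2)

lemma splits2_eq_cons_map_splitsMid (w : List α) :
    splits2 w = ([], w) :: (splitsMid w).map fun m => (m.1 ++ [m.2.1], m.2.2) := by
  induction w with
  | nil => rfl
  | cons t r ih => simp [splits2_cons, ih, splitsMid, Function.comp_def]

lemma splits2_eq_map_splitsMid_append (w : List α) :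
    splits2 w = (splitsMid w).map (fun m => (m.1, m.2.1 :: m.2.2)) ++ [(w, [])] := by
  induction w with
  | nil => rfl
  | cons t r ih => simp [splits2_cons, ih, splitsMid, Function.comp_def]

lemma lsum_splits2_ite_fst_eq_nil (w : List α) (f : List α × List α → M) :
    lsum (splits2 w) (fun p => if p.1 = [] then f p else 0) = f ([], w) := by
  cases w <;> simp [splits2_cons]

lemma lsum_splits2_ite_snd_eq_nil (w : List α) (f : List α × List α → M) :
    lsum (splits2 w) (fun p => if p.2 = [] then f p else 0) = f (w, []) := by
  simp [splits2_eq_map_splitsMid_append w]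

lemma lsum_splits3 (w : List α) (f : List α × List α × List α → M) :
    lsum (splits3 w) f =
      lsum (splits2 w) fun p => lsum (splits2 p.2) fun q => f (p.1, q.1, q.2) := by
  simp [splits3, lsum_flatMap]

def splitShuffleSum (u x y : List α) (F : List α → List α → M) : M :=
  lsum (splits2 u) fun p => lsum (shuffles p.1 x) fun a => lsum (shuffles p.2 y) fun b => F a b

lemma splitShuffleSum_mul_right {R : Type*} [NonUnitalNonAssocSemiring R] (u x y : List α)
    (F : List α → List α → R) (r : R) :
    splitShuffleSum u x y (fun a b => F a b * r) = splitShuffleSum u x y F * r := by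
  simp only [splitShuffleSum, lsum_mul_right]

lemma lsum_shuffles_splits2 (u v : List α) (F : List α → List α → M) :
    lsum (shuffles u v) (fun w => lsum (splits2 w) fun p => F p.1 p.2) =
      lsum (splits2 v) fun q => splitShuffleSum u q.1 q.2 F := by
  induction u generalizing v F with
  | nil => simp [splitShuffleSum]
  | cons ξ u ihu =>
    induction v generalizing F with
    | nil => simp [splitShuffleSum]
    | cons η v ihv =>
      have h₁ := ihu (η :: v) fun a b => F (ξ :: a) b
      have h₂ := ihv fun a b => F (η :: a) b
      simp only [splitShuffleSum, splits2_cons, lsum_cons, lsum_nil, lsum_map,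
        lsum_shuffles_cons_cons, shuffles_nil_left, shuffles_nil_right, lsum_add,
        add_zero] at h₁ h₂ ⊢
      rw [h₁, h₂]
      abel

lemma splitShuffleSum_append_cons (u x y : List α) (z : α) (f : List α → M) :
    splitShuffleSum u x y (fun a c => f (a ++ z :: c)) = lsum (shuffles u (x ++ z :: y)) f := by
  induction u generalizing x f with
  | nil => simp [splitShuffleSum]
  | cons ξ u ihu =>
    induction x generalizing f with
    | nil =>
      have := ihu [] fun w => f (ξ :: w)
      simp only [splitShuffleSum, splits2_cons, lsum_cons, lsum_map, lsum_shuffles_cons_cons,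
        shuffles_nil_right, lsum_nil, add_zero, List.nil_append, List.cons_append] at this ⊢
      rw [← this]; abel
    | cons η x ihx =>
      have := ihu (η :: x) fun w => f (ξ :: w)
      simp only [splitShuffleSum, splits2_cons, lsum_cons, lsum_map, lsum_shuffles_cons_cons,
        shuffles_nil_left, lsum_nil, add_zero, List.cons_append, lsum_add] at this ihx ⊢
      rw [← this, ← ihx]; abel

/-- The part of the triple deconcatenation of `u ш v` in which the middle factor is a factor
of `v`. -/
def oneSidedSum (G : List α → List α → List α → M) (u v : List α) : M :=
  lsum (splits3 v) fun t => splitShuffleSum u t.1 t.2.2 fun a c => G a t.2.1 c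

end Splits

section Alternality

variable {F : Type*} [Field F] {A B : List F → F}

lemma Alternal.lsum_shuffles (hA : Alternal A) {u v : List F} (hu : u ≠ []) (hv : v ≠ []) :
    lsum (shuffles u v) A = 0 :=
  hA u v hu hv

lemma Alternal.lsum_shuffles_eq (hA : Alternal A) (x y : List F) :
    lsum (shuffles x y) A = if x = [] then A y else if y = [] then A x else 0 := by
  split_ifs with hx hy
  · simp [hx]
  · simp [hy]
  · exact hA.lsum_shuffles hx hy

lemma Alternal.add (hA : Alternal A) (hB : Alternal B) : Alternal fun w => A w + B w :=
  fun u v hu hv => (lsum_add _ A B).trans (by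
    rw [hA.lsum_shuffles hu hv, hB.lsum_shuffles hu hv, add_zero])

lemma Alternal.sub (hA : Alternal A) (hB : Alternal B) : Alternal fun w => A w - B w :=
  fun u v hu hv => (lsum_sub _ A B).trans (by
    rw [hA.lsum_shuffles hu hv, hB.lsum_shuffles hu hv, sub_zero])

end Alternality

section Lu

variable {F : Type*} [Field F] {A B : List F → F}

lemma mu_eq_lsum (A B : List F → F) (w : List F) :
    mu A B w = lsum (splits2 w) fun p => A p.1 * B p.2 := by
  rw [mu, lsum, splits2, List.map_map]
  rfl

lemma lsum_shuffles_mu (hA : Alternal A) (hB : Alternal B) {u v : List F} (hu : u ≠ [])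
    (hv : v ≠ []) : lsum (shuffles u v) (mu A B) = A v * B u + A u * B v := by
  have hprod : ∀ q ∈ splits2 v, ∀ p ∈ splits2 u,
      lsum (shuffles p.1 q.1) A * lsum (shuffles p.2 q.2) B =
        (if p.1 = [] then if q.2 = [] then A v * B u else 0 else 0) +
          (if q.1 = [] then if p.2 = [] then A u * B v else 0 else 0) := by
    rintro ⟨q₁, q₂⟩ hq ⟨p₁, p₂⟩ hp
    rw [mem_splits2] at hp hq
    subst hp hq
    rw [hA.lsum_shuffles_eq, hB.lsum_shuffles_eq]
    split_ifs <;> simp_all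
  rw [lsum_congr fun w _ => mu_eq_lsum A B w]
  refine (lsum_shuffles_splits2 u v fun a b => A a * B b).trans ?_
  simp only [splitShuffleSum, lsum_mul_left, lsum_mul_right]
  rw [lsum_congr fun q hq => lsum_congr fun p hp => hprod q hq p hp]
  simp only [lsum_add, lsum_ite, lsum_splits2_ite_fst_eq_nil, lsum_splits2_ite_snd_eq_nil]

lemma Alternal.lu (hA : Alternal A) (hB : Alternal B) : Alternal (lu A B) :=
  fun u v hu hv => (lsum_sub _ (mu A B) (mu B A)).trans (by
    rw [lsum_shuffles_mu hA hB hu hv, lsum_shuffles_mu hB hA hu hv]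
    ring)

end Lu

section Blocks

variable {F : Type*} [Field F] {B : List F → F} (H : F → List F → List F → F)

def blockTerm (B : List F → F) (H : F → List F → List F → F) (a b c : List F) : F :=
  if b = [] then 0 else H b.sum a c * B b

lemma lsum_shuffles_blockTerm (hB : Alternal B) (a c x y : List F) :
    lsum (shuffles x y) (fun b => blockTerm B H a b c) =
      (if x = [] then blockTerm B H a y c else 0) +
        (if y = [] then blockTerm B H a x c else 0) := by
  by_cases hx : x = []
  · subst hx
    by_cases hy : y = [] <;> simp [blockTerm, hy]
  by_cases hy : y = []
  · subst hy
    simp [hx]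
  have hconst : ∀ b ∈ shuffles x y, blockTerm B H a b c = H (x.sum + y.sum) a c * B b := by
    intro b hb
    rw [blockTerm, if_neg (ne_nil_of_mem_shuffles hx hb),
      (perm_append_of_mem_shuffles hb).sum_eq, List.sum_append]
  rw [lsum_congr hconst, lsum_mul_left, hB.lsum_shuffles hx hy]
  simp [hx, hy]

lemma lsum_shuffles_splits2_blockTerm (hB : Alternal B) (a x y : List F) :
    lsum (shuffles x y) (fun r => lsum (splits2 r) fun q => blockTerm B H a q.1 q.2) =
      lsum (splits2 y) (fun q => lsum (shuffles x q.2) (blockTerm B H a q.1)) +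
        lsum (splits2 x) (fun p => lsum (shuffles p.2 y) (blockTerm B H a p.1)) := by
  have hblock : ∀ p q : List F × List F,
      lsum (shuffles p.1 q.1) (fun b => lsum (shuffles p.2 q.2) (blockTerm B H a b)) =
        (if p.1 = [] then lsum (shuffles p.2 q.2) (blockTerm B H a q.1) else 0) +
          (if q.1 = [] then lsum (shuffles p.2 q.2) (blockTerm B H a p.1) else 0) := by
    intro p q
    rw [lsum_comm]
    simp only [lsum_shuffles_blockTerm H hB, lsum_add, lsum_ite]
  rw [lsum_shuffles_splits2]
  simp only [splitShuffleSum, hblock, lsum_add, lsum_ite, lsum_splits2_ite_fst_eq_nil]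

lemma lsum_shuffles_splits3_blockTerm (hB : Alternal B) (u v : List F) :
    lsum (shuffles u v) (fun w => lsum (splits3 w) fun t => blockTerm B H t.1 t.2.1 t.2.2) =
      oneSidedSum (blockTerm B H) u v + oneSidedSum (blockTerm B H) v u := by
  simp only [lsum_splits3]
  refine (lsum_shuffles_splits2 u v
    (fun a r => lsum (splits2 r) fun q => blockTerm B H a q.1 q.2)).trans ?_
  simp only [splitShuffleSum, lsum_shuffles_splits2_blockTerm H hB, lsum_add, oneSidedSum,
    lsum_splits3]
  congr 1
  · exact lsum_congr fun q _ => lsum_comm₃ _ _ _ _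
  · rw [lsum_comm]
    refine lsum_congr fun p _ => (lsum_comm₃ _ _ _ _).trans ?_
    refine lsum_congr fun p' _ => lsum_congr fun q _ => ?_
    rw [lsum_shuffles_comm]
    exact lsum_congr fun a _ => lsum_shuffles_comm _ _ _

lemma oneSidedSum_blockTerm_congr {H₁ H₂ : F → List F → List F → F} {u v : List F}
    (h : ∀ s x y, splitShuffleSum u x y (H₁ s) = splitShuffleSum u x y (H₂ s)) :
    oneSidedSum (blockTerm B H₁) u v = oneSidedSum (blockTerm B H₂) u v := by
  refine lsum_congr fun t _ => ?_
  by_cases hb : t.2.1 = []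
  · simp [blockTerm, hb]
  · simp only [blockTerm, if_neg hb, splitShuffleSum_mul_right, h]

end Blocks

section Arit

variable {F : Type*} [Field F] {A B : List F → F}

lemma addLast_concat (s z : F) (a : List F) : addLast s (a ++ [z]) = a ++ [z + s] := by
  induction a with
  | nil => rfl
  | cons x a ih => cases a <;> simp_all [addLast]

def flexFirst (A : List F → F) (s : F) (a c : List F) : F :=
  if c = [] then 0 else A (a ++ addFirst s c)

def flexLast (A : List F → F) (s : F) (a c : List F) : F :=
  if a = [] then 0 else A (addLast s a ++ c)

lemma amitU_eq_lsum_blockTerm (A B : List F → F) (w : List F) :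
    amitU B A w = lsum (splits3 w) fun t => blockTerm B (flexFirst A) t.1 t.2.1 t.2.2 := by
  rw [amitU, lsum]
  congr 1
  refine List.map_congr_left ?_
  rintro ⟨a, _ | _, _ | _⟩ _ <;> simp [blockTerm, flexFirst]

lemma anitU_eq_lsum_blockTerm (A B : List F → F) (w : List F) :
    anitU B A w = lsum (splits3 w) fun t => blockTerm B (flexLast A) t.1 t.2.1 t.2.2 := by
  rw [anitU, lsum]
  congr 1
  refine List.map_congr_left ?_
  rintro ⟨_ | _, _ | _, c⟩ _ <;> simp [blockTerm, flexLast]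

def letterShiftSum (A : List F → F) (s : F) (u x y : List F) : F :=
  lsum (splitsMid u) fun m => lsum (shuffles m.1 x) fun a =>
    lsum (shuffles m.2.2 y) fun c => A (a ++ (m.2.1 + s) :: c)

lemma splitShuffleSum_flexFirst (hA : Alternal A) {u : List F} (hu : u ≠ []) (s : F)
    (x y : List F) : splitShuffleSum u x y (flexFirst A s) = letterShiftSum A s u x y := by
  rcases y with _ | ⟨y₀, y⟩
  · simp [splitShuffleSum, splits2_eq_map_splitsMid_append u, flexFirst, letterShiftSum,
      addFirst]
  -- the leftover terms shift the first letter `y₀` of `y` and make up a shuffle sum of `A`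
  have hzero : splitShuffleSum u x y (fun a c => A (a ++ (y₀ + s) :: c)) = 0 := by
    rw [splitShuffleSum_append_cons]
    exact hA.lsum_shuffles hu (by simp)
  rw [splitShuffleSum, splits2_eq_map_splitsMid_append] at hzero ⊢
  simp [flexFirst, letterShiftSum, lsum_shuffles_cons_cons, lsum_add, addFirst] at hzero ⊢
  linear_combination hzero

lemma splitShuffleSum_flexLast (hA : Alternal A) {u : List F} (hu : u ≠ []) (s : F)
    (x y : List F) : splitShuffleSum u x y (flexLast A s) = letterShiftSum A s u x y := by
  obtain rfl | ⟨x, z, rfl⟩ := List.eq_nil_or_concat' x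
  · simp [splitShuffleSum, splits2_eq_cons_map_splitsMid u, flexLast, letterShiftSum,
      addLast_concat]
  have hzero : splitShuffleSum u x y (fun a c => A (a ++ (z + s) :: c)) = 0 := by
    rw [splitShuffleSum_append_cons]
    exact hA.lsum_shuffles hu (by simp)
  rw [splitShuffleSum, splits2_eq_cons_map_splitsMid] at hzero ⊢
  simp [flexLast, letterShiftSum, lsum_shuffles_concat_concat, lsum_add, addLast_concat]
    at hzero ⊢
  linear_combination hzero

lemma Alternal.aritU (hA : Alternal A) (hB : Alternal B) : Alternal (aritU B A) := by
  have hside : ∀ {u : List F}, u ≠ [] → ∀ v,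
      oneSidedSum (blockTerm B (flexFirst A)) u v =
        oneSidedSum (blockTerm B (flexLast A)) u v :=
    fun hu _ => oneSidedSum_blockTerm_congr fun s x y =>
      (splitShuffleSum_flexFirst hA hu s x y).trans (splitShuffleSum_flexLast hA hu s x y).symm
  intro u v hu hv
  change lsum (shuffles u v) (fun w => amitU B A w - anitU B A w) = 0
  rw [lsum_sub, lsum_congr fun w _ => amitU_eq_lsum_blockTerm A B w,
    lsum_congr fun w _ => anitU_eq_lsum_blockTerm A B w,
    lsum_shuffles_splits3_blockTerm _ hB, lsum_shuffles_splits3_blockTerm _ hB,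
    hside hu, hside hv, sub_self]

end Arit

lemma ariU_nil {F : Type*} [Field F] (A B : List F → F) : ariU A B [] = 0 := by
  simp [ariU, aritU, amitU, anitU, lu, mu, splits3, splits2, mul_comm]

theorem ariU_alternal_general (A B : List K → K)
    (hA : Alternal A) (hB : Alternal B) :
    ariU A B [] = 0 ∧ Alternal (ariU A B) :=
  ⟨ariU_nil A B, ((hA.aritU hB).add (hA.lu hB)).sub (hB.aritU hA)⟩

/-- the alternal moulds of ARI are closed under the ari-bracket. -/
theorem ariU_alternal (A B : List K → K) (hA0 : A [] = 0) (hB0 : B [] = 0)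
    (hA : Alternal A) (hB : Alternal B) :
    ariU A B [] = 0 ∧ Alternal (ariU A B) :=
  ariU_alternal_general A B hA hB
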